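/- arXiv:1903.06601 — 2 statements merged into one kernel-verified Lean document; each statement's English description precedes it below -/
import Mathlib

section
/- Suppose a list L of N elements is partitioned into consecutive groups each of size at least g ≥ 1 except possibly the last. Fix an element x ∈ L belonging to group G, and suppose an element y ≥ x (in list order) lies within distance D of x in the list (at most D elements strictly between x and y). If each group contributes at most 2 representatives to an auxiliary sorted list V, then y's group is within ⌈D/g⌉ + 1 groups of G, and hence y's nearest representative in V is within 2(⌈D/g⌉ + 1) positions of any representative of G in V. -/
/-!
Every group strictly between the groups of `x` and `y` is full (it precedes the last group) and,
by monotonicity of the group index, lies strictly between `x` and `y` in the list. These groups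
are disjoint, so `(gp y - gp x - 1) * g ≤ y - x - 1 ≤ D`, which bounds the group gap by `D / g + 1`.
Each group in `(gp x, gp y]` contributes at most two representatives.
-/

open Finset

theorem Monotone.card_filter_mem_Ioo_le {α β : Type*} [LinearOrder α] [LocallyFiniteOrder α]
    [Preorder β] [LocallyFiniteOrder β] [DecidableEq β] {f : α → β} (hf : Monotone f)
    (s : Finset α) (x y : α) :
    #{i ∈ s | f i ∈ Ioo (f x) (f y)} ≤ #(Ioo x y) := by
  refine card_le_card fun i hi => ?_
  obtain ⟨hxi, hiy⟩ := mem_Ioo.1 (mem_filter.1 hi).2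
  exact mem_Ioo.2 ⟨hf.reflect_lt hxi, hf.reflect_lt hiy⟩

theorem Monotone.card_Ioo_mul_le_of_le_card_fiber {α β : Type*} [LinearOrder α]
    [LocallyFiniteOrder α] [Preorder β] [LocallyFiniteOrder β] [DecidableEq β] {f : α → β}
    (hf : Monotone f) (s : Finset α) (x y : α) {g : ℕ}
    (hfiber : ∀ j ∈ Ioo (f x) (f y), g ≤ #{i ∈ s | f i = j}) :
    #(Ioo (f x) (f y)) * g ≤ #(Ioo x y) :=
  calc #(Ioo (f x) (f y)) * g
      ≤ ∑ j ∈ Ioo (f x) (f y), #{i ∈ s | f i = j} := by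
        rw [← smul_eq_mul]
        exact card_nsmul_le_sum _ _ _ hfiber
    _ = #{i ∈ s | f i ∈ Ioo (f x) (f y)} := sum_card_fiberwise_eq_card_filter _ _ _
    _ ≤ #(Ioo x y) := hf.card_filter_mem_Ioo_le s x y

theorem group_index_sub_le_div {N g D : ℕ} (hg : 1 ≤ g) {gp : ℕ → ℕ} (hmono : Monotone gp)
    (hsize : ∀ j < gp (N - 1), g ≤ #{i ∈ range N | gp i = j})
    {x y : ℕ} (hyN : y < N) (hD : y - x ≤ D + 1) :
    gp y - gp x - 1 ≤ D / g := by
  have hfiber : ∀ j ∈ Ioo (gp x) (gp y), g ≤ #{i ∈ range N | gp i = j} := fun j hj =>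
    hsize j ((mem_Ioo.1 hj).2.trans_le (hmono (Nat.le_pred_of_lt hyN)))
  have hcount := hmono.card_Ioo_mul_le_of_le_card_fiber (range N) x y hfiber
  rw [Nat.card_Ioo, Nat.card_Ioo] at hcount
  rw [Nat.le_div_iff_mul_le hg]
  omega

theorem stmt_8_general (N g D : ℕ) (hg : 1 ≤ g) (gp : ℕ → ℕ) (hmono : Monotone gp)
    (repCount : ℕ → ℕ) (hrep : ∀ j, repCount j ≤ 2)
    (hsize : ∀ j < gp (N - 1),
      g ≤ ((Finset.range N).filter (fun i => gp i = j)).card)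
    (x y : ℕ) (hyN : y < N) (hD : y - x ≤ D + 1) :
    gp y ≤ gp x + ((D + g - 1) / g + 1) ∧
      ∑ j ∈ Finset.Ioc (gp x) (gp y), repCount j ≤ 2 * ((D + g - 1) / g + 1) := by
  have hgap : gp y - gp x ≤ (D + g - 1) / g + 1 := by
    have := group_index_sub_le_div hg hmono hsize hyN hD
    have : D / g ≤ (D + g - 1) / g := Nat.div_le_div_right (by omega)
    omega
  refine ⟨by omega, ?_⟩
  calc ∑ j ∈ Ioc (gp x) (gp y), repCount j
      ≤ #(Ioc (gp x) (gp y)) • 2 := sum_le_card_nsmul _ _ _ fun j _ => hrep j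
    _ ≤ 2 * ((D + g - 1) / g + 1) := by
        rw [Nat.card_Ioc, smul_eq_mul]
        omega

/-- Finger-search locality: in a list partitioned into consecutive groups of
size ≥ g (except possibly the last), if `y ≥ x` lies within distance `D` of `x`
(at most `D` elements strictly between), then `y`'s group is within
`⌈D/g⌉ + 1` groups of `x`'s group, and since each group contributes at most 2
representatives to the auxiliary list `V`, at most `2(⌈D/g⌉ + 1)`
representatives separate them in `V`. -/
theorem stmt_8 (N g D : ℕ) (hg : 1 ≤ g) (gp : ℕ → ℕ) (hmono : Monotone gp)
    (repCount : ℕ → ℕ) (hrep : ∀ j, repCount j ≤ 2)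
    (hsize : ∀ j < gp (N - 1),
      g ≤ ((Finset.range N).filter (fun i => gp i = j)).card)
    (x y : ℕ) (hxy : x ≤ y) (hyN : y < N) (hD : y - x ≤ D + 1) :
    gp y ≤ gp x + ((D + g - 1) / g + 1) ∧
      ∑ j ∈ Finset.Ioc (gp x) (gp y), repCount j ≤ 2 * ((D + g - 1) / g + 1) :=
  stmt_8_general N g D hg gp hmono repCount hrep hsize x y hyN hD
end

section
/- Non-crossing of representative bridge segments: let C'(u) be formed by selecting from each block of ≥ 2·log⁴n consecutive segments of a list C(u) (ordered consistently with the vertical order) the middle segment as representative, where each block loses at most log⁴n segments to deletions before being rebuilt. Then any two representative segments in C'(u) are separated by at least one non-deleted segment in C(u), and hence, since non-deleted segments do not intersect and separation by a real segment prevents crossing, the segments of C'(u) are pairwise non-intersecting. -/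
open Classical

/-- Non-crossing of representative bridge segments: list positions are ordered
consistently with the vertical order of real (non-deleted) segments over the
slab `[A, Bd]`, and every segment lies pointwise on the correct side of every
real segment (separation by a real segment prevents crossing).  If each
representative (one per block, distinct blocks) is followed within its block by
at least `L ≥ 1` real segments, then any two representatives are separated in
the list by a real segment, and hence representatives are pairwise
non-intersecting over the slab. -/
theorem stmt_19 (N L : ℕ) (hL : 1 ≤ L) (A Bd : ℝ)
    (f : ℕ → ℝ → ℝ) (real : ℕ → Prop)
    (blk : ℕ → ℕ) (hblk : Monotone blk)
    (horder : ∀ i j, i < j → real i → real j →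
      ∀ t ∈ Set.Icc A Bd, f i t < f j t)
    (hside : ∀ i k, real k →
      (i < k → ∀ t ∈ Set.Icc A Bd, f i t < f k t) ∧
      (k < i → ∀ t ∈ Set.Icc A Bd, f k t < f i t))
    (R : Finset ℕ) (hRN : ∀ i ∈ R, i < N)
    (hdistinct : ∀ i ∈ R, ∀ j ∈ R, i ≠ j → blk i ≠ blk j)
    (hreals : ∀ i ∈ R, L ≤
      ((Finset.range N).filter (fun k => i < k ∧ blk k = blk i ∧ real k)).card) :
    (∀ i ∈ R, ∀ j ∈ R, i < j → ∃ k, i < k ∧ k < j ∧ real k) ∧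
      (∀ i ∈ R, ∀ j ∈ R, i ≠ j → ∀ t ∈ Set.Icc A Bd, f i t ≠ f j t) := by
  have hsep : ∀ i ∈ R, ∀ j ∈ R, i < j → ∃ k, i < k ∧ k < j ∧ real k := by
    intro i hi j hj hij
    have hcard := hreals i hi
    have hne : ((Finset.range N).filter (fun k => i < k ∧ blk k = blk i ∧ real k)).Nonempty := by
      rw [← Finset.card_pos]; omega
    obtain ⟨k, hk⟩ := hne
    simp only [Finset.mem_filter, Finset.mem_range] at hk
    obtain ⟨-, hik, hbk, hrk⟩ := hk
    refine ⟨k, hik, ?_, hrk⟩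
    by_contra h
    have hjk : j ≤ k := Nat.le_of_not_lt h
    have h1 : blk j ≤ blk k := hblk hjk
    have h2 : blk i ≤ blk j := hblk hij.le
    have : blk i ≠ blk j := hdistinct i hi j hj hij.ne
    omega
  refine ⟨hsep, ?_⟩
  intro i hi j hj hij t ht
  rcases lt_or_gt_of_ne hij with h | h
  · obtain ⟨k, h1, h2, hrk⟩ := hsep i hi j hj h
    exact ne_of_lt (lt_trans ((hside i k hrk).1 h1 t ht) ((hside j k hrk).2 h2 t ht))
  · obtain ⟨k, h1, h2, hrk⟩ := hsep j hj i hi h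
    exact ne_of_gt (lt_trans ((hside j k hrk).1 h1 t ht) ((hside i k hrk).2 h2 t ht))
end
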